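/- arXiv:1805.03882 — 4 statements merged into one kernel-verified Lean document; each statement's English description precedes it below -/
import Mathlib

section
/- Let A_cl be an n×n real matrix, P a symmetric positive definite matrix, and Q a symmetric positive definite matrix satisfying the Lyapunov equation P·A_cl + A_clᵀ·P = −Q. Suppose R : ℝ^n → ℝ^n satisfies ‖R(x)‖ ≤ σ‖x‖ for all x with ‖x‖ ≤ Γ, where σ > 0 satisfies λ_min(Q) > 2σ·λ_max(P). Then for every x with 0 < ‖x‖ ≤ Γ, the derivative of V(x) = xᵀPx along the vector field g(x) = A_cl·x + R(x), namely W(x) = xᵀP·g(x) + g(x)ᵀP·x, satisfies W(x) ≤ −(λ_min(Q) − 2σ·λ_max(P))·‖x‖² < 0. -/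
/-!
By the Lyapunov equation, `xᵀP g + gᵀP x = -xᵀQx + 2 xᵀP r` with `r = R x`. The first term is at
most `-λ_min(Q) ‖x‖²`. For the second, the weighted AM-GM inequality
`2σ xᵀP r ≤ σ² xᵀP x + rᵀP r` for the positive form `P`, together with `P ≤ λ_max(P)` and
`‖r‖ ≤ σ ‖x‖`, gives `xᵀP r ≤ σ λ_max(P) ‖x‖²`.
-/

open Matrix
open scoped MatrixOrder

namespace Matrix

variable {ι : Type*} [Fintype ι]

lemma IsSymm.dotProduct_mulVec_comm {R : Type*} [CommSemiring R] {A : Matrix ι ι R}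
    (hA : A.IsSymm) (x y : ι → R) : x ⬝ᵥ (A *ᵥ y) = y ⬝ᵥ (A *ᵥ x) := by
  rw [dotProduct_mulVec, ← vecMul_transpose, hA.eq, dotProduct_comm]

lemma dotProduct_mulVec_add_eq_of_lyapunov {R : Type*} [CommRing R] {A P Q : Matrix ι ι R}
    (hP : P.IsSymm) (hLyap : P * A + Aᵀ * P = -Q) (x r : ι → R) :
    x ⬝ᵥ (P *ᵥ (A *ᵥ x + r)) + (A *ᵥ x + r) ⬝ᵥ (P *ᵥ x) =
      -(x ⬝ᵥ (Q *ᵥ x)) + 2 * (x ⬝ᵥ (P *ᵥ r)) := by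
  have hQ : x ⬝ᵥ (Q *ᵥ x) = -(x ⬝ᵥ (P *ᵥ (A *ᵥ x)) + (A *ᵥ x) ⬝ᵥ (P *ᵥ x)) := by
    rw [← neg_neg Q, ← hLyap, neg_mulVec, dotProduct_neg, add_mulVec, dotProduct_add,
      ← mulVec_mulVec, ← mulVec_mulVec, dotProduct_mulVec x Aᵀ, vecMul_transpose]
  rw [hQ, mulVec_add, dotProduct_add, add_dotProduct, hP.dotProduct_mulVec_comm r]
  ring

lemma PosSemidef.two_mul_dotProduct_mulVec_le {A : Matrix ι ι ℝ} (hA : A.PosSemidef)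
    (x y : ι → ℝ) : 2 * (x ⬝ᵥ (A *ᵥ y)) ≤ x ⬝ᵥ (A *ᵥ x) + y ⬝ᵥ (A *ᵥ y) := by
  have := hA.dotProduct_mulVec_nonneg (x - y)
  simp only [star_trivial, mulVec_sub, dotProduct_sub, sub_dotProduct] at this
  rw [(isHermitian_iff_isSymm.mp hA.1).dotProduct_mulVec_comm y x] at this
  linarith

variable [DecidableEq ι] {A : Matrix ι ι ℝ} {c : ℝ}

lemma IsHermitian.posSemidef_sub_smul_one (hA : A.IsHermitian)
    (hc : ∀ i, c ≤ hA.eigenvalues i) : (A - c • 1).PosSemidef := by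
  have hle := (algebraMap_le_iff_le_spectrum (R := ℝ) (r := c) (a := A) hA).2 (by
    rw [hA.spectrum_real_eq_range_eigenvalues]
    rintro _ ⟨i, rfl⟩
    exact hc i)
  rwa [le_iff, Algebra.algebraMap_eq_smul_one] at hle

lemma IsHermitian.posSemidef_smul_one_sub (hA : A.IsHermitian)
    (hc : ∀ i, hA.eigenvalues i ≤ c) : (c • 1 - A).PosSemidef := by
  have hle := (le_algebraMap_iff_spectrum_le (R := ℝ) (r := c) (a := A) hA).2 (by
    rw [hA.spectrum_real_eq_range_eigenvalues]
    rintro _ ⟨i, rfl⟩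
    exact hc i)
  rwa [le_iff, Algebra.algebraMap_eq_smul_one] at hle

lemma IsHermitian.mul_dotProduct_self_le (hA : A.IsHermitian)
    (hc : ∀ i, c ≤ hA.eigenvalues i) (x : ι → ℝ) : c * (x ⬝ᵥ x) ≤ x ⬝ᵥ (A *ᵥ x) := by
  have := (hA.posSemidef_sub_smul_one hc).dotProduct_mulVec_nonneg x
  simp only [star_trivial, sub_mulVec, smul_mulVec, one_mulVec, dotProduct_sub,
    dotProduct_smul, smul_eq_mul] at this
  linarith

lemma IsHermitian.dotProduct_mulVec_le (hA : A.IsHermitian)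
    (hc : ∀ i, hA.eigenvalues i ≤ c) (x : ι → ℝ) : x ⬝ᵥ (A *ᵥ x) ≤ c * (x ⬝ᵥ x) := by
  have := (hA.posSemidef_smul_one_sub hc).dotProduct_mulVec_nonneg x
  simp only [star_trivial, sub_mulVec, smul_mulVec, one_mulVec, dotProduct_sub,
    dotProduct_smul, smul_eq_mul] at this
  linarith

lemma PosSemidef.dotProduct_mulVec_le_of_dotProduct_self_le (hA : A.PosSemidef)
    (hc : ∀ i, hA.1.eigenvalues i ≤ c) (hc₀ : 0 ≤ c) {σ : ℝ} (hσ : 0 < σ) {x y : ι → ℝ}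
    (hy : y ⬝ᵥ y ≤ σ ^ 2 * (x ⬝ᵥ x)) : x ⬝ᵥ (A *ᵥ y) ≤ σ * c * (x ⬝ᵥ x) := by
  have hAMGM := hA.two_mul_dotProduct_mulVec_le (σ • x) y
  have hx := hA.1.dotProduct_mulVec_le hc (σ • x)
  have hy' := hA.1.dotProduct_mulVec_le hc y
  simp only [mulVec_smul, dotProduct_smul, smul_dotProduct, smul_eq_mul] at hAMGM hx
  have : 2 * σ * (x ⬝ᵥ (A *ᵥ y)) ≤ 2 * σ * (σ * c * (x ⬝ᵥ x)) := by
    nlinarith [mul_le_mul_of_nonneg_left hy hc₀]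
  exact le_of_mul_le_mul_left this (by positivity)

end Matrix

lemma EuclideanSpace.norm_sq_eq_dotProduct {ι : Type*} [Fintype ι] (x : EuclideanSpace ℝ ι) :
    ‖x‖ ^ 2 = x.ofLp ⬝ᵥ x.ofLp := by
  rw [EuclideanSpace.real_norm_sq_eq]
  simp only [dotProduct, sq]

theorem lyapunov_derivative_negative_general (n : ℕ)
    (Acl P Q : Matrix (Fin n) (Fin n) ℝ)
    (hP : P.PosDef) (hQ : Q.PosDef)
    (hLyap : P * Acl + Acl.transpose * P = -Q)
    (R : EuclideanSpace ℝ (Fin n) → EuclideanSpace ℝ (Fin n))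
    (σ Γ : ℝ) (hσ : 0 < σ)
    (hR : ∀ x : EuclideanSpace ℝ (Fin n), ‖x‖ ≤ Γ → ‖R x‖ ≤ σ * ‖x‖)
    (hgap : 2 * σ * (⨆ i, hP.1.eigenvalues i) < ⨅ i, hQ.1.eigenvalues i)
    (g : EuclideanSpace ℝ (Fin n) → Fin n → ℝ)
    (hg : ∀ y : EuclideanSpace ℝ (Fin n), g y = Acl.mulVec (y : Fin n → ℝ) + WithLp.equiv 2 (Fin n → ℝ) (R y))
    (x : EuclideanSpace ℝ (Fin n)) (hx0 : 0 < ‖x‖) (hxΓ : ‖x‖ ≤ Γ) :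
    dotProduct (x : Fin n → ℝ) (P.mulVec (g x)) +
      dotProduct (g x) (P.mulVec (x : Fin n → ℝ))
      ≤ -((⨅ i, hQ.1.eigenvalues i) - 2 * σ * (⨆ i, hP.1.eigenvalues i)) * ‖x‖ ^ 2 ∧
    -((⨅ i, hQ.1.eigenvalues i) - 2 * σ * (⨆ i, hP.1.eigenvalues i)) * ‖x‖ ^ 2 < 0 := by
  set lQ := ⨅ i, hQ.1.eigenvalues i
  set lP := ⨆ i, hP.1.eigenvalues i
  have hQx : lQ * ‖x‖ ^ 2 ≤ x.ofLp ⬝ᵥ (Q *ᵥ x.ofLp) := by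
    rw [EuclideanSpace.norm_sq_eq_dotProduct]
    exact hQ.1.mul_dotProduct_self_le (fun i ↦ ciInf_le (Set.finite_range _).bddBelow i) _
  have hRx : (R x).ofLp ⬝ᵥ (R x).ofLp ≤ σ ^ 2 * (x.ofLp ⬝ᵥ x.ofLp) := by
    rw [← EuclideanSpace.norm_sq_eq_dotProduct, ← EuclideanSpace.norm_sq_eq_dotProduct, ← mul_pow]
    exact pow_le_pow_left₀ (norm_nonneg _) (hR x hxΓ) 2
  have hPx : x.ofLp ⬝ᵥ (P *ᵥ (R x).ofLp) ≤ σ * lP * ‖x‖ ^ 2 := by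
    rw [EuclideanSpace.norm_sq_eq_dotProduct]
    exact hP.posSemidef.dotProduct_mulVec_le_of_dotProduct_self_le
      (fun i ↦ le_ciSup (Set.finite_range _).bddAbove i)
      (Real.iSup_nonneg fun i ↦ (hP.eigenvalues_pos i).le) hσ hRx
  rw [hg x, WithLp.equiv_apply,
    dotProduct_mulVec_add_eq_of_lyapunov (isHermitian_iff_isSymm.mp hP.1) hLyap]
  constructor
  · linarith
  · exact mul_neg_of_neg_of_pos (by linarith) (by positivity)

/-- Lyapunov derivative estimate: if `P A_cl + A_clᵀ P = -Q` with `P, Q` symmetric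
positive definite and the remainder `R` satisfies `‖R x‖ ≤ σ ‖x‖` on the ball of
radius `Γ`, with `λ_min(Q) > 2 σ λ_max(P)`, then the derivative of `V(x) = xᵀPx`
along `g(x) = A_cl x + R x` is negative on the punctured ball. -/
theorem lyapunov_derivative_negative (n : ℕ)
    (Acl P Q : Matrix (Fin n) (Fin n) ℝ)
    (hP : P.PosDef) (hQ : Q.PosDef)
    (hLyap : P * Acl + Acl.transpose * P = -Q)
    (R : EuclideanSpace ℝ (Fin n) → EuclideanSpace ℝ (Fin n))
    (σ Γ : ℝ) (hσ : 0 < σ) (hΓ : 0 < Γ)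
    (hR : ∀ x : EuclideanSpace ℝ (Fin n), ‖x‖ ≤ Γ → ‖R x‖ ≤ σ * ‖x‖)
    (hgap : 2 * σ * (⨆ i, hP.1.eigenvalues i) < ⨅ i, hQ.1.eigenvalues i)
    (g : EuclideanSpace ℝ (Fin n) → Fin n → ℝ)
    (hg : ∀ y : EuclideanSpace ℝ (Fin n), g y = Acl.mulVec (y : Fin n → ℝ) + WithLp.equiv 2 (Fin n → ℝ) (R y))
    (x : EuclideanSpace ℝ (Fin n)) (hx0 : 0 < ‖x‖) (hxΓ : ‖x‖ ≤ Γ) :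
    dotProduct (x : Fin n → ℝ) (P.mulVec (g x)) +
      dotProduct (g x) (P.mulVec (x : Fin n → ℝ))
      ≤ -((⨅ i, hQ.1.eigenvalues i) - 2 * σ * (⨆ i, hP.1.eigenvalues i)) * ‖x‖ ^ 2 ∧
    -((⨅ i, hQ.1.eigenvalues i) - 2 * σ * (⨆ i, hP.1.eigenvalues i)) * ‖x‖ ^ 2 < 0 :=
  lyapunov_derivative_negative_general n Acl P Q hP hQ hLyap R σ Γ hσ hR hgap g hg x hx0 hxΓ
end

section
/- Let A, B be n×n and n×m real matrices. If rank(B, AB, …, A^{n−1}B) = n, then for every λ ∈ ℂ the matrix (A − λI, B), viewed as an n×(n+m) complex matrix, has rank n (Hautus condition). -/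
/-!
If `c` is a complex left null vector of `(A - λI, B)`, then `c A = λ c` and `c B = 0`, so
`c A^k B = λ^k c B = 0` for all `k`: `c` annihilates the controllability matrix. That matrix is
real, so the real and imaginary parts of `c` annihilate it as well, and both vanish because it
has full row rank.
-/

open Matrix

namespace Matrix

variable {R ι κ : Type*}

theorem rank_eq_card_iff_forall_vecMul_eq_zero [Field R] [Fintype ι] [Fintype κ]
    (M : Matrix ι κ R) :
    M.rank = Fintype.card ι ↔ ∀ c : ι → R, c ᵥ* M = 0 → c = 0 := by
  rw [M.rank_eq_finrank_span_row, eq_comm, ← Set.finrank,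
    ← linearIndependent_iff_card_eq_finrank_span, ← vecMul_injective_iff, ← coe_vecMulLinear,
    injective_iff_map_eq_zero]
  rfl

theorem vecMul_pow_eq_of_vecMul_eq_smul [CommSemiring R] [Fintype ι] [DecidableEq ι]
    {A : Matrix ι ι R} {c : ι → R} {μ : R} (h : c ᵥ* A = μ • c) (k : ℕ) :
    c ᵥ* A ^ k = μ ^ k • c := by
  induction k with
  | zero => simp
  | succ k ih => rw [pow_succ, ← vecMul_vecMul, ih, smul_vecMul, h, smul_smul, pow_succ]

/-- The controllability matrix `(B, AB, …, A^{N-1}B)`; column `(k, j)` is column `j` of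
`A^k B`. -/
def ctrb [Semiring R] [Fintype ι] [DecidableEq ι] (A : Matrix ι ι R) (B : Matrix ι κ R)
    (N : ℕ) :
    Matrix ι (Fin N × κ) R :=
  of fun i p => (A ^ (p.1 : ℕ) * B) i p.2

theorem ctrb_map {S : Type*} [Semiring R] [Semiring S] [Fintype ι] [DecidableEq ι]
    (f : R →+* S) (A : Matrix ι ι R) (B : Matrix ι κ R) (N : ℕ) :
    (ctrb A B N).map f = ctrb (A.map f) (B.map f) N := by
  ext i p
  simp only [ctrb, map_apply, of_apply, RingHom.map_matrix_mul, Matrix.map_pow]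

theorem vecMul_ctrb_eq_zero [CommSemiring R] [Fintype ι] [DecidableEq ι]
    {A : Matrix ι ι R} {B : Matrix ι κ R} {c : ι → R} {μ : R}
    (hA : c ᵥ* A = μ • c) (hB : c ᵥ* B = 0) (N : ℕ) : c ᵥ* ctrb A B N = 0 := by
  ext ⟨k, j⟩
  have : c ᵥ* (A ^ (k : ℕ) * B) = 0 := by
    rw [← vecMul_vecMul, vecMul_pow_eq_of_vecMul_eq_smul hA, smul_vecMul, hB, smul_zero]
  exact congrFun this j

theorem re_vecMul_map_ofReal [Fintype ι] (c : ι → ℂ) (K : Matrix ι κ ℝ) (j : κ) :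
    ((c ᵥ* K.map Complex.ofReal) j).re = ((fun i => (c i).re) ᵥ* K) j := by
  simp [vecMul, dotProduct, Complex.re_sum]

theorem im_vecMul_map_ofReal [Fintype ι] (c : ι → ℂ) (K : Matrix ι κ ℝ) (j : κ) :
    ((c ᵥ* K.map Complex.ofReal) j).im = ((fun i => (c i).im) ᵥ* K) j := by
  simp [vecMul, dotProduct, Complex.im_sum]

theorem eq_zero_of_vecMul_map_ofReal_eq_zero [Fintype ι] {K : Matrix ι κ ℝ}
    (hK : ∀ v : ι → ℝ, v ᵥ* K = 0 → v = 0) {c : ι → ℂ}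
    (hc : c ᵥ* K.map Complex.ofReal = 0) :
    c = 0 := by
  have hre : (fun i => (c i).re) = 0 := hK _ <| funext fun j => by
    rw [← re_vecMul_map_ofReal, hc]; rfl
  have him : (fun i => (c i).im) = 0 := hK _ <| funext fun j => by
    rw [← im_vecMul_map_ofReal, hc]; rfl
  exact funext fun i => Complex.ext (congrFun hre i) (congrFun him i)

end Matrix

/-- Kalman controllability implies the Hautus condition: for every `λ ∈ ℂ`,
the matrix `(A - λI, B)` has full row rank `n`. -/
theorem kalman_implies_hautus (n m : ℕ)
    (A : Matrix (Fin n) (Fin n) ℝ) (B : Matrix (Fin n) (Fin m) ℝ)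
    (hctrb : (Matrix.of fun (i : Fin n) (p : Fin n × Fin m) =>
        (A ^ (p.1 : ℕ) * B) i p.2).rank = n) :
    ∀ lam : ℂ,
      (Matrix.fromCols
        (A.map (Complex.ofReal) - lam • (1 : Matrix (Fin n) (Fin n) ℂ))
        (B.map (Complex.ofReal))).rank = n := by
  intro lam
  have hK := (rank_eq_card_iff_forall_vecMul_eq_zero (ctrb A B n)).mp (by rwa [Fintype.card_fin])
  conv_rhs => rw [← Fintype.card_fin n]
  rw [rank_eq_card_iff_forall_vecMul_eq_zero]
  intro c hc
  rw [vecMul_fromCols, ← Sum.elim_zero_zero, Sum.elim_eq_iff] at hc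
  obtain ⟨hA, hB⟩ := hc
  rw [vecMul_sub, vecMul_smul, vecMul_one, sub_eq_zero] at hA
  exact eq_zero_of_vecMul_map_ofReal_eq_zero hK <|
    (ctrb_map Complex.ofRealHom A B n).symm ▸ vecMul_ctrb_eq_zero hA hB n
end

section
/- With the 8×8 matrix A and the 8×4 matrix B̂ of the linearized double-pendulum crane system with payload torque control (as specified in context) and with parameter values M = 0.2, m_p = 10, m_h = 0.1, I_p = 4, I_h = 0.05, g = 9.81, l₂ = 2, the Kalman controllability matrix (B̂, AB̂, …, A⁷B̂) has rank 8. -/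
/-- Explicit numeric value of `B̂`. -/
noncomputable def craneB1 : Matrix (Fin 8) (Fin 4) ℝ :=
  Matrix.of fun i j =>
    if i = 4 ∧ j = 0 then 110/133
    else if i = 4 ∧ j = 3 then -(50/133)
    else if i = 5 ∧ j = 1 then 250/13433
    else if i = 6 ∧ j = 2 then 20
    else if i = 7 ∧ j = 0 then -(50/133)
    else if i = 7 ∧ j = 3 then 103/532
    else 0

/-- Explicit numeric value of `A * B̂`. -/
noncomputable def craneAB1 : Matrix (Fin 8) (Fin 4) ℝ :=
  Matrix.of fun i j =>
    if i = 0 ∧ j = 0 then 110/133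
    else if i = 0 ∧ j = 3 then -(50/133)
    else if i = 1 ∧ j = 1 then 250/13433
    else if i = 2 ∧ j = 2 then 20
    else if i = 3 ∧ j = 0 then -(50/133)
    else if i = 3 ∧ j = 3 then 103/532
    else 0

noncomputable def craneT0 : Matrix (Fin 4) (Fin 8) ℝ :=
  Matrix.of fun i j =>
    if i = 0 ∧ j = 4 then 103/10
    else if i = 0 ∧ j = 7 then 20
    else if i = 1 ∧ j = 5 then 13433/250
    else if i = 2 ∧ j = 6 then 1/20
    else if i = 3 ∧ j = 4 then 20
    else if i = 3 ∧ j = 7 then 44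
    else 0

noncomputable def craneT1 : Matrix (Fin 4) (Fin 8) ℝ :=
  Matrix.of fun i j =>
    if i = 0 ∧ j = 0 then 103/10
    else if i = 0 ∧ j = 3 then 20
    else if i = 1 ∧ j = 1 then 13433/250
    else if i = 2 ∧ j = 2 then 1/20
    else if i = 3 ∧ j = 0 then 20
    else if i = 3 ∧ j = 3 then 44
    else 0

/-- The explicit right inverse of the Kalman matrix. -/
noncomputable def craneP : Matrix (Fin 8 × Fin 4) (Fin 8) ℝ :=
  Matrix.of fun p j => if p.1 = 0 then craneT0 p.2 j else if p.1 = 1 then craneT1 p.2 j else 0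

set_option maxHeartbeats 2000000 in
lemma crane_num : craneB1 * craneT0 + craneAB1 * craneT1 = 1 := by
  ext i j
  fin_cases i <;> fin_cases j <;>
    simp (config := { decide := true }) [craneB1, craneAB1, craneT0, craneT1,
      Matrix.mul_apply, Matrix.add_apply, Fin.sum_univ_succ, Matrix.one_apply] <;> norm_num

set_option maxHeartbeats 2000000 in
/-- With the paper's numerical parameter values, the Kalman controllability matrix
`(B̂, AB̂, …, A⁷B̂)` of the linearized crane system with payload torque control has
full rank 8. -/
theorem crane_with_torque_controllable
    (M mp mh Ip Ih g l2 Sm D : ℝ)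
    (hM : M = 0.2) (hmp : mp = 10) (hmh : mh = 0.1) (hIp : Ip = 4)
    (hIh : Ih = 0.05) (hg : g = 9.81) (hl2 : l2 = 2)
    (hSm : Sm = M + mh + mp)
    (hD : D = Ip * Sm + l2 ^ 2 * mh * mp + M * l2 ^ 2 * mp)
    (A : Matrix (Fin 8) (Fin 8) ℝ)
    (hA : A = Matrix.of fun i j =>
      if i = 0 ∧ j = 4 then 1
      else if i = 1 ∧ j = 5 then 1
      else if i = 2 ∧ j = 6 then 1
      else if i = 3 ∧ j = 7 then 1
      else if i = 4 ∧ j = 3 then g * l2 ^ 2 * mp ^ 2 / D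
      else if i = 7 ∧ j = 3 then -(g * l2 * mp * Sm / D)
      else 0)
    (Bh : Matrix (Fin 8) (Fin 4) ℝ)
    (hB : Bh = Matrix.of fun i j =>
      if i = 4 ∧ j = 0 then (mp * l2 ^ 2 + Ip) / D
      else if i = 4 ∧ j = 3 then -(l2 * mp / D)
      else if i = 5 ∧ j = 1 then 1 / (2 * Ih * (mh + mp) * D)
      else if i = 6 ∧ j = 2 then 1 / Ih
      else if i = 7 ∧ j = 0 then -(l2 * mp / D)
      else if i = 7 ∧ j = 3 then Sm / D
      else 0) :
    (Matrix.of fun (i : Fin 8) (p : Fin 8 × Fin 4) =>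
        (A ^ (p.1 : ℕ) * Bh) i p.2).rank = 8 := by
  subst hM hmp hmh hIp hIh hg hl2 hSm hD
  have hBh : Bh = craneB1 := by
    rw [hB]
    ext i j
    fin_cases i <;> fin_cases j <;>
      simp (config := { decide := true }) [craneB1] <;> norm_num
  have hAB : A * Bh = craneAB1 := by
    rw [hA, hB]
    ext i j
    fin_cases i <;> fin_cases j <;>
      simp (config := { decide := true }) [Matrix.mul_apply, Fin.sum_univ_succ, craneAB1] <;> norm_num
  set C : Matrix (Fin 8) (Fin 8 × Fin 4) ℝ :=
    Matrix.of fun (i : Fin 8) (p : Fin 8 × Fin 4) => (A ^ (p.1 : ℕ) * Bh) i p.2 with hC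
  have key : C * craneP = 1 := by
    have h1 : C * craneP = Bh * craneT0 + (A * Bh) * craneT1 := by
      ext i j
      have hz : ∑ x : Fin 6, ∑ p2 : Fin 4,
          C i (x.succ.succ, p2) * craneP (x.succ.succ, p2) j = 0 := by
        refine Finset.sum_eq_zero fun x _ => Finset.sum_eq_zero fun p2 _ => ?_
        simp (config := { decide := true }) [craneP, Fin.succ_ne_zero, Fin.succ_succ_ne_one]
      rw [Matrix.mul_apply, Fintype.sum_prod_type,
        Fin.sum_univ_succ (f := fun p1 : Fin 8 => ∑ p2 : Fin 4, C i (p1, p2) * craneP (p1, p2) j),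
        Fin.sum_univ_succ (f := fun p1 : Fin 7 => ∑ p2 : Fin 4, C i (p1.succ, p2) * craneP (p1.succ, p2) j),
        hz, add_zero]
      simp [hC, craneP, Matrix.mul_apply, Matrix.add_apply, Fin.succ_zero_eq_one,
        Fin.succ_ne_zero, Fin.val_zero, Fin.val_one, pow_zero, pow_one, Matrix.one_mul,
        Matrix.one_apply, ite_mul, one_mul, zero_mul, Finset.sum_ite_eq, Finset.mem_univ]
    rw [h1, hAB, hBh, crane_num]
  refine le_antisymm ?_ ?_
  · simpa using Matrix.rank_le_card_height C
  · calc (8 : ℕ) = (1 : Matrix (Fin 8) (Fin 8) ℝ).rank := by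
          rw [Matrix.rank_one]; simp
      _ = (C * craneP).rank := by rw [key]
      _ ≤ C.rank := Matrix.rank_mul_le_left C craneP
end

section
/- Let Δ(x₂, x₃, x₄) be the denominator of the double-pendulum crane dynamics: Δ = I_h I_p m_h² + I_h I_p m_p² + I_h M l₂² m_p² + 2I_p M m_h² x₂² + 2I_p M m_p² x₂² + 2I_h I_p M m_h + 2I_h I_p M m_p + I_h l₂² m_h m_p² + I_h l₂² m_h² m_p + 2I_h I_p m_h m_p + I_h I_p m_h² cos(2x₃) + I_h I_p m_p² cos(2x₃) + I_h M l₂² m_p² cos(2x₃ − 2x₄) + 2I_h I_p m_h m_p cos(2x₃) + 2M l₂² m_h m_p² x₂² + 2M l₂² m_h² m_p x₂² + 2I_h M l₂² m_h m_p + 4I_p M m_h m_p x₂² + I_h l₂² m_h m_p² cos(2x₃) + I_h l₂² m_h² m_p cos(2x₃), with all parameters strictly positive. Then Δ > 0 for all real x₂, x₃, x₄. In particular Δ does not vanish even when x₂ = 0, so the system has no singularity at zero hoisting-rope length when I_h > 0. -/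
/-- The common denominator `Δ` of the double-pendulum crane dynamics is strictly
positive for all states; in particular there is no singularity at zero rope
length when `I_h > 0`. -/
theorem crane_denominator_positive (Ih Ip M mh mp l2 : ℝ)
    (hIh : 0 < Ih) (hIp : 0 < Ip) (hM : 0 < M)
    (hmh : 0 < mh) (hmp : 0 < mp) (hl2 : 0 < l2) (x2 x3 x4 : ℝ) :
    0 <
      Ih * Ip * mh ^ 2 + Ih * Ip * mp ^ 2 + Ih * M * l2 ^ 2 * mp ^ 2 +
      2 * Ip * M * mh ^ 2 * x2 ^ 2 + 2 * Ip * M * mp ^ 2 * x2 ^ 2 +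
      2 * Ih * Ip * M * mh + 2 * Ih * Ip * M * mp +
      Ih * l2 ^ 2 * mh * mp ^ 2 + Ih * l2 ^ 2 * mh ^ 2 * mp +
      2 * Ih * Ip * mh * mp +
      Ih * Ip * mh ^ 2 * Real.cos (2 * x3) + Ih * Ip * mp ^ 2 * Real.cos (2 * x3) +
      Ih * M * l2 ^ 2 * mp ^ 2 * Real.cos (2 * x3 - 2 * x4) +
      2 * Ih * Ip * mh * mp * Real.cos (2 * x3) +
      2 * M * l2 ^ 2 * mh * mp ^ 2 * x2 ^ 2 + 2 * M * l2 ^ 2 * mh ^ 2 * mp * x2 ^ 2 +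
      2 * Ih * M * l2 ^ 2 * mh * mp + 4 * Ip * M * mh * mp * x2 ^ 2 +
      Ih * l2 ^ 2 * mh * mp ^ 2 * Real.cos (2 * x3) +
      Ih * l2 ^ 2 * mh ^ 2 * mp * Real.cos (2 * x3) := by
  have h1 := Real.neg_one_le_cos (2 * x3)
  have h2 := Real.neg_one_le_cos (2 * x3 - 2 * x4)
  nlinarith [mul_pos hIh hIp, mul_pos hM (add_pos hmh hmp), sq_nonneg x2,
    mul_pos (mul_pos hIh hIp) (mul_pos hM (add_pos hmh hmp)),
    mul_pos hIh (mul_pos hIp (by positivity : (0:ℝ) < (mh+mp)^2)),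
    mul_nonneg (mul_nonneg hIh.le hIp.le) (mul_nonneg (sq_nonneg (mh+mp)) (by nlinarith : (0:ℝ) ≤ 1 + Real.cos (2*x3))),
    mul_nonneg (mul_nonneg (mul_nonneg hIh.le hM.le) (mul_nonneg (sq_nonneg l2) (sq_nonneg mp))) (by nlinarith : (0:ℝ) ≤ 1 + Real.cos (2*x3-2*x4)),
    mul_pos (mul_pos hIh hM) (mul_pos (mul_pos (pow_pos hl2 2) hmh) hmp),
    mul_pos (mul_pos hIh (pow_pos hl2 2)) (mul_pos hmh hmp),
    mul_nonneg (mul_nonneg (mul_nonneg hIh.le (sq_nonneg l2)) (mul_nonneg hmh.le hmp.le)) (mul_nonneg (add_pos hmh hmp).le (by nlinarith : (0:ℝ) ≤ 1 + Real.cos (2*x3))),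
    mul_nonneg (mul_nonneg (mul_nonneg (by positivity : (0:ℝ) ≤ 2*M) (sq_nonneg x2)) (add_pos hmh hmp).le) (by positivity : (0:ℝ) ≤ Ip*(mh+mp) + l2^2*mh*mp)]
end
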